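/- arXiv:1412.8283 — 5 statements merged into one kernel-verified Lean document; each statement's English description precedes it below -/
import Mathlib

section
/- Let B be a pseudometric betweenness on a set V and let a, b, c, x be four distinct points of V. If [axb], [bxc], and [cxa] all hold, then {a,b,c} is not collinear. -/
/-- A pseudometric betweenness on a set `V`: a ternary relation satisfying (M0)–(M3). -/
structure PseudometricBetweenness (V : Type*) where
  btw : V → V → V → Prop
  m0 : ∀ a b c : V, btw a b c → a ≠ b ∧ b ≠ c ∧ a ≠ c
  m1 : ∀ a b c : V, btw a b c → btw c b a
  m2 : ∀ a b c : V, btw a b c → ¬ btw b a c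
  m3 : ∀ a b c d : V, btw a b c → btw a c d → btw a b d ∧ btw b c d

namespace PseudometricBetweenness

variable {V : Type*}

/-- The line generated by two distinct points `a` and `b`. -/
def line (B : PseudometricBetweenness V) (a b : V) : Set V :=
  {a, b} ∪ {c | B.btw a b c ∨ B.btw a c b ∨ B.btw c a b}

/-- The set of all lines of the pseudometric betweenness `B`. -/
def lines (B : PseudometricBetweenness V) : Set (Set V) :=
  {L | ∃ a b : V, a ≠ b ∧ L = B.line a b}

/-- `{a, b, c}` is collinear if one of `[abc]`, `[bca]`, `[cab]` holds. -/
def Collinear3 (B : PseudometricBetweenness V) (a b c : V) : Prop :=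
  B.btw a b c ∨ B.btw b c a ∨ B.btw c a b

/-- `I(a, b)` is the set of points lying (strictly) between `a` and `b`. -/
def I (B : PseudometricBetweenness V) (a b : V) : Set V :=
  {x | B.btw a x b}

/-- `O(a, b)` is the set of points `x` with `[xab]` or `[abx]`. -/
def O (B : PseudometricBetweenness V) (a b : V) : Set V :=
  {x | B.btw x a b ∨ B.btw a b x}

/-- A set of points is geodesic if some ordering of it is a geodesic sequence. -/
def IsGeodesicSet (B : PseudometricBetweenness V) (S : Set V) : Prop :=
  ∃ (k : ℕ) (p : Fin k → V), Function.Injective p ∧ Set.range p = S ∧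
    ∀ r s t : Fin k, r < s → s < t → B.btw (p r) (p s) (p t)

/-- `(a, b, c, d)` is a parallelogram if `[abc]`, `[bcd]`, `[cda]` and `[dab]` hold. -/
def Parallelogram (B : PseudometricBetweenness V) (a b c d : V) : Prop :=
  B.btw a b c ∧ B.btw b c d ∧ B.btw c d a ∧ B.btw d a b

/-- The pairs `{a, b}` and `{c, d}` are parallel if `(a, b, c, d)` or `(a, b, d, c)` is a
parallelogram. -/
def Parallel (B : PseudometricBetweenness V) (a b c d : V) : Prop :=
  B.Parallelogram a b c d ∨ B.Parallelogram a b d c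

/-- The pairs `{a, b}` and `{c, d}` are antipodal if `(a, c, b, d)` is a parallelogram. -/
def Antipodal (B : PseudometricBetweenness V) (a b c d : V) : Prop :=
  B.Parallelogram a c b d

/-- The pairs `{a, b}` and `{x, y}` are α-related if the set `{a, b, x, y}` is geodesic. -/
def AlphaRelated (B : PseudometricBetweenness V) (a b x y : V) : Prop :=
  B.IsGeodesicSet ({a, b, x, y} : Set V)

/-- The pairs `{a, b}` and `{x, y}` are β-related if they are parallel and
`I(a, b) = I(x, y) = ∅`. -/
def BetaRelated (B : PseudometricBetweenness V) (a b x y : V) : Prop :=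
  B.Parallel a b x y ∧ B.I a b = ∅ ∧ B.I x y = ∅

/-- The pairs `{a, b}` and `{x, y}` are γ-related if they are antipodal and
`O(a, b) = O(x, y) = ∅`. -/
def GammaRelated (B : PseudometricBetweenness V) (a b x y : V) : Prop :=
  B.Antipodal a b x y ∧ B.O a b = ∅ ∧ B.O x y = ∅

/-- `{q, r}` is a β-pair if some other pair generating the same line is β-related to it. -/
def IsBetaPair (B : PseudometricBetweenness V) (q r : V) : Prop :=
  q ≠ r ∧ ∃ s t : V, s ≠ t ∧ ({s, t} : Set V) ≠ {q, r} ∧ B.line s t = B.line q r ∧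
    B.BetaRelated q r s t

/-- `{q, r}` is a γ-pair if some other pair generating the same line is γ-related to it. -/
def IsGammaPair (B : PseudometricBetweenness V) (q r : V) : Prop :=
  q ≠ r ∧ ∃ s t : V, s ≠ t ∧ ({s, t} : Set V) ≠ {q, r} ∧ B.line s t = B.line q r ∧
    B.GammaRelated q r s t

end PseudometricBetweenness

/-- If `a`, `b`, `c`, `x` are four distinct points with `[axb]`, `[bxc]` and `[cxa]`,
then `{a, b, c}` is not collinear. -/
theorem not_collinear_of_center {V : Type*} (B : PseudometricBetweenness V)
    (a b c x : V) (hab : a ≠ b) (hac : a ≠ c) (hax : a ≠ x)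
    (hbc : b ≠ c) (hbx : b ≠ x) (hcx : c ≠ x)
    (h1 : B.btw a x b) (h2 : B.btw b x c) (h3 : B.btw c x a) :
    ¬ B.Collinear3 a b c := by
  rintro (h | h | h)
  · exact B.m2 x b c (B.m3 a x b c h1 h).2 h2
  · exact B.m2 x c a (B.m3 b x c a h2 h).2 h3
  · exact B.m2 x a b (B.m3 c x a b h3 h).2 h1
end

section
/- Let B be a pseudometric betweenness on a set V, and let a, b, x, y be points of V with a ≠ b, x ≠ y and {a,b} ≠ {x,y}. If ov(ab) = ov(xy), then the pairs {a,b} and {x,y} are α-related, β-related, or γ-related. -/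
namespace PseudometricBetweenness

variable {V : Type*}

section Helpers
variable (B : PseudometricBetweenness V)

lemma bsymm {p q r : V} (h : B.btw p q r) : B.btw r q p := B.m1 _ _ _ h

lemma noflip {p q r : V} (h1 : B.btw p q r) (h2 : B.btw p r q) : False := by
  have := (B.m3 p q r q h1 h2).1
  exact (B.m0 _ _ _ this).2.1 rfl

lemma f2 {p q r s : V} (h1 : B.btw p q s) (h2 : B.btw q r s) :
    B.btw p q r ∧ B.btw p r s := by
  have h3 := B.m3 s r q p (B.m1 _ _ _ h2) (B.m1 _ _ _ h1)
  exact ⟨B.m1 _ _ _ h3.2, B.m1 _ _ _ h3.1⟩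

lemma geo3 {p q r : V} (h : B.btw p q r) : B.IsGeodesicSet {p, q, r} := by
  obtain ⟨hpq, hqr, hpr⟩ := B.m0 _ _ _ h
  refine ⟨3, ![p, q, r], ?_, ?_, ?_⟩
  · intro i j hij
    fin_cases i <;> fin_cases j <;> simp_all
  · ext z
    simp [Fin.exists_fin_succ]
    tauto
  · intro i j k hij hjk
    fin_cases i <;> fin_cases j <;> fin_cases k <;> simp_all

lemma geo4 {p q r s : V} (h1 : B.btw p q r) (h2 : B.btw p r s) :
    B.IsGeodesicSet {p, q, r, s} := by
  obtain ⟨h3, h4⟩ := B.m3 _ _ _ _ h1 h2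
  obtain ⟨hpq, hqr, hpr⟩ := B.m0 _ _ _ h1
  obtain ⟨-, hrs, hps⟩ := B.m0 _ _ _ h2
  obtain ⟨-, hqs, -⟩ := B.m0 _ _ _ h3
  refine ⟨4, ![p, q, r, s], ?_, ?_, ?_⟩
  · intro i j hij
    fin_cases i <;> fin_cases j <;> simp_all
  · ext z
    simp [Fin.exists_fin_succ]
    tauto
  · intro i j k hij hjk
    fin_cases i <;> fin_cases j <;> fin_cases k <;> simp_all

lemma alpha_of_geo3 {a b x y p q r : V} (h : B.btw p q r)
    (hs : ({a, b, x, y} : Set V) = {p, q, r}) : B.AlphaRelated a b x y := by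
  unfold AlphaRelated
  rw [hs]
  exact B.geo3 h

lemma alpha_of_geo4 {a b x y p q r s : V} (h1 : B.btw p q r) (h2 : B.btw p r s)
    (hs : ({a, b, x, y} : Set V) = {p, q, r, s}) : B.AlphaRelated a b x y := by
  unfold AlphaRelated
  rw [hs]
  exact B.geo4 h1 h2

lemma mem_line_iff {z a b : V} :
    z ∈ B.line a b ↔ z = a ∨ z = b ∨ B.btw a b z ∨ B.btw a z b ∨ B.btw z a b := by
  simp only [line, Set.mem_union, Set.mem_insert_iff, Set.mem_singleton_iff,
    Set.mem_setOf_eq]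
  tauto

lemma line_symm (a b : V) : B.line a b = B.line b a := by
  ext z
  rw [B.mem_line_iff, B.mem_line_iff]
  constructor <;>
    rintro (h | h | h | h | h) <;>
    first
      | exact Or.inl h
      | exact Or.inr (Or.inl h)
      | exact Or.inr (Or.inr (Or.inl (B.bsymm h)))
      | exact Or.inr (Or.inr (Or.inr (Or.inl (B.bsymm h))))
      | exact Or.inr (Or.inr (Or.inr (Or.inr (B.bsymm h))))

lemma I_symm (a b : V) : B.I a b = B.I b a := by
  ext z
  exact ⟨fun h => B.bsymm h, fun h => B.bsymm h⟩

/-- In the parallel (β) configuration, `I (a, b)` is empty. -/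
lemma I_empty_of_pg {a b x y : V} (h1 : B.btw a b x) (h2 : B.btw y a b)
    (h3 : B.btw b x y) (h4 : B.btw x y a) (hline : B.line a b = B.line x y) :
    B.I a b = ∅ := by
  ext z
  simp only [I, Set.mem_setOf_eq, Set.mem_empty_iff_false, iff_false]
  intro hz
  have hzl : z ∈ B.line x y := by
    rw [← hline, B.mem_line_iff]
    exact Or.inr (Or.inr (Or.inr (Or.inl hz)))
  rw [B.mem_line_iff] at hzl
  rcases hzl with rfl | rfl | hc | hc | hc
  · exact B.noflip h1 hz
  · exact B.noflip (B.bsymm hz) (B.bsymm h2)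
  · -- hc : btw x y z
    have hz' := B.bsymm hz
    have k1 := B.m3 b z a y hz' (B.bsymm h2)
    have k2 := B.m3 z a y x k1.2 (B.bsymm hc)
    have k3 := B.m3 x b a z (B.bsymm h1) (B.bsymm k2.1)
    exact B.noflip k3.2 hz'
  · -- hc : btw x z y
    have k1 := B.f2 h2 hz
    have k2 := B.f2 (B.bsymm h4) (B.bsymm hc)
    exact B.m2 _ _ _ k1.1 k2.1
  · -- hc : btw z x y
    have k1 := B.m3 a z b x hz h1
    have k2 := B.m3 z b x y k1.2 hc
    have k3 := B.m3 y a b z h2 (B.bsymm k2.1)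
    exact B.noflip k3.2 hz

lemma betaCase {a b x y : V} (h1 : B.btw a b x) (h2 : B.btw y a b)
    (h3 : B.btw b x y) (h4 : B.btw x y a) (hline : B.line a b = B.line x y) :
    B.BetaRelated a b x y :=
  ⟨Or.inl ⟨h1, h3, h4, h2⟩, B.I_empty_of_pg h1 h2 h3 h4 hline,
    B.I_empty_of_pg h4 h3 h2 h1 hline.symm⟩

lemma beta_swap {a b x y : V} (h : B.BetaRelated a b y x) : B.BetaRelated a b x y :=
  ⟨h.1.symm, h.2.1, (B.I_symm x y).trans h.2.2⟩

/-- In the antipodal (γ) configuration, no point `z` satisfies `[abz]`. -/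
lemma O_half_of_pg {a b x y z : V} (h1 : B.btw a x b) (h2 : B.btw a y b)
    (h3 : B.btw x a y) (h4 : B.btw x b y) (hline : B.line a b = B.line x y)
    (hz : B.btw a b z) : False := by
  have hzl : z ∈ B.line x y := by
    rw [← hline, B.mem_line_iff]
    exact Or.inr (Or.inr (Or.inl hz))
  rw [B.mem_line_iff] at hzl
  rcases hzl with rfl | rfl | hc | hc | hc
  · exact B.noflip hz h1
  · exact B.noflip hz h2
  · -- hc : btw x y z
    have k2 := B.m3 x b y z h4 hc
    have k3 := B.f2 hz k2.2
    exact B.noflip k3.1 h2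
  · -- hc : btw x z y
    have k1 := B.m3 a x b z h1 hz
    have k2 := B.m3 a y b z h2 hz
    have k3 := B.m3 x b z y k1.2 hc
    exact B.noflip k2.2 (B.bsymm k3.2)
  · -- hc : btw z x y
    have k2 := B.m3 y b x z (B.bsymm h4) (B.bsymm hc)
    have k3 := B.f2 hz k2.2
    exact B.noflip k3.1 h1

lemma O_empty_of_pg {a b x y : V} (h1 : B.btw a x b) (h2 : B.btw a y b)
    (h3 : B.btw x a y) (h4 : B.btw x b y) (hline : B.line a b = B.line x y) :
    B.O a b = ∅ := by
  ext z
  simp only [O, Set.mem_setOf_eq, Set.mem_empty_iff_false, iff_false]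
  rintro (hz | hz)
  · exact B.O_half_of_pg (B.bsymm h1) (B.bsymm h2) h4 h3
      ((B.line_symm b a).trans hline) (B.bsymm hz)
  · exact B.O_half_of_pg h1 h2 h3 h4 hline hz

lemma gammaCase {a b x y : V} (h1 : B.btw a x b) (h2 : B.btw a y b)
    (h3 : B.btw x a y) (h4 : B.btw x b y) (hline : B.line a b = B.line x y) :
    B.GammaRelated a b x y :=
  ⟨⟨h1, h4, B.bsymm h2, B.bsymm h3⟩, B.O_empty_of_pg h1 h2 h3 h4 hline,
    B.O_empty_of_pg h3 h4 h1 h2 hline.symm⟩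

lemma alpha_deg {a b x y w : V} (hw : w ∈ B.line a b) (hwa : w ≠ a) (hwb : w ≠ b)
    (hs : ({a, b, x, y} : Set V) = {a, b, w}) : B.AlphaRelated a b x y := by
  rw [B.mem_line_iff] at hw
  rcases hw with h | h | h | h | h
  · exact absurd h hwa
  · exact absurd h hwb
  · exact B.alpha_of_geo3 h hs
  · exact B.alpha_of_geo3 h (hs.trans (by ext z; simp; try tauto))
  · exact B.alpha_of_geo3 h (hs.trans (by ext z; simp; try tauto))

end Helpers

end PseudometricBetweenness

set_option maxHeartbeats 1600000 in
/-- Two distinct pairs generating the same line are α-related, β-related or γ-related. -/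
theorem same_line_related {V : Type*} (B : PseudometricBetweenness V)
    (a b x y : V) (hab : a ≠ b) (hxy : x ≠ y) (hne : ({a, b} : Set V) ≠ {x, y})
    (hline : B.line a b = B.line x y) :
    B.AlphaRelated a b x y ∨ B.BetaRelated a b x y ∨ B.GammaRelated a b x y := by
  by_cases hxa : x = a
  · subst hxa
    refine Or.inl (B.alpha_deg (w := y) ?_ (Ne.symm hxy) ?_ (by ext z; simp; try tauto))
    · rw [hline]
      exact B.mem_line_iff.mpr (Or.inr (Or.inl rfl))
    · intro h
      exact hne (by rw [h])
  by_cases hxb : x = b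
  · subst hxb
    refine Or.inl (B.alpha_deg (w := y) ?_ ?_ (Ne.symm hxy) (by ext z; simp; try tauto))
    · rw [hline]
      exact B.mem_line_iff.mpr (Or.inr (Or.inl rfl))
    · intro h
      subst h
      exact hne (by ext z; simp; try tauto)
  by_cases hya : y = a
  · subst hya
    refine Or.inl (B.alpha_deg (w := x) ?_ hxy ?_ (by ext z; simp; try tauto))
    · rw [hline]
      exact B.mem_line_iff.mpr (Or.inl rfl)
    · intro h
      subst h
      exact hne (by ext z; simp; try tauto)
  by_cases hyb : y = b
  · subst hyb
    refine Or.inl (B.alpha_deg (w := x) ?_ ?_ hxy (by ext z; simp; try tauto))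
    · rw [hline]
      exact B.mem_line_iff.mpr (Or.inl rfl)
    · intro h
      exact hne (by rw [h])
  -- all four points distinct
  have hx : B.btw a b x ∨ B.btw a x b ∨ B.btw x a b := by
    have hm : x ∈ B.line a b := by
      rw [hline]
      exact B.mem_line_iff.mpr (Or.inl rfl)
    have h0 := B.mem_line_iff.mp hm
    simp only [hxa, hxb, false_or] at h0
    exact h0
  have hy : B.btw a b y ∨ B.btw a y b ∨ B.btw y a b := by
    have hm : y ∈ B.line a b := by
      rw [hline]
      exact B.mem_line_iff.mpr (Or.inr (Or.inl rfl))
    have h0 := B.mem_line_iff.mp hm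
    simp only [hya, hyb, false_or] at h0
    exact h0
  have ha : B.btw x y a ∨ B.btw x a y ∨ B.btw a x y := by
    have hm : a ∈ B.line x y := by
      rw [← hline]
      exact B.mem_line_iff.mpr (Or.inl rfl)
    have h0 := B.mem_line_iff.mp hm
    simp only [Ne.symm hxa, Ne.symm hya, false_or] at h0
    exact h0
  have hb : B.btw x y b ∨ B.btw x b y ∨ B.btw b x y := by
    have hm : b ∈ B.line x y := by
      rw [← hline]
      exact B.mem_line_iff.mpr (Or.inr (Or.inl rfl))
    have h0 := B.mem_line_iff.mp hm
    simp only [Ne.symm hxb, Ne.symm hyb, false_or] at h0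
    exact h0
  rcases hx with hx | hx | hx
  · -- hx : [abx]
    rcases hy with hy | hy | hy
    · -- hy : [aby]
      rcases ha with ha | ha | ha
      · exact Or.inl (B.alpha_of_geo4 hy (B.bsymm ha) (by ext z; simp; try tauto))
      · exact absurd hy (B.m2 _ _ _ (B.m3 x b a y (B.bsymm hx) ha).2)
      · exact Or.inl (B.alpha_of_geo4 hx ha (by ext z; simp; try tauto))
    · -- hy : [ayb]
      exact Or.inl (B.alpha_of_geo4 hy hx (by ext z; simp; try tauto))
    · -- hy : [yab]
      rcases ha with ha | ha | ha
      · rcases hb with hb | hb | hb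
        · exact Or.inl (B.alpha_of_geo4 (B.bsymm hy) (B.bsymm hb) (by ext z; simp; try tauto))
        · exact Or.inl (B.alpha_of_geo4 hb ha (by ext z; simp; try tauto))
        · exact Or.inr (Or.inl (B.betaCase hx hy hb ha hline))
      · have k := B.f2 (B.bsymm ha) hx
        exact Or.inl (B.alpha_of_geo4 k.1 k.2 (by ext z; simp; try tauto))
      · exact Or.inl (B.alpha_of_geo4 hx ha (by ext z; simp; try tauto))
  · -- hx : [axb]
    rcases hy with hy | hy | hy
    · exact Or.inl (B.alpha_of_geo4 hx hy (by ext z; simp; try tauto))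
    · -- hy : [ayb]
      rcases ha with ha | ha | ha
      · exact Or.inl (B.alpha_of_geo4 (B.bsymm ha) hx (by ext z; simp; try tauto))
      · rcases hb with hb | hb | hb
        · exact Or.inl (B.alpha_of_geo4 (B.bsymm hb) (B.bsymm hx) (by ext z; simp; try tauto))
        · exact Or.inr (Or.inr (B.gammaCase hx hy ha hb hline))
        · exact Or.inl (B.alpha_of_geo4 hb (B.bsymm hy) (by ext z; simp; try tauto))
      · exact Or.inl (B.alpha_of_geo4 ha hy (by ext z; simp; try tauto))
    · -- hy : [yab]
      have k := B.f2 hy hx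
      exact Or.inl (B.alpha_of_geo4 k.1 k.2 (by ext z; simp; try tauto))
  · -- hx : [xab]
    rcases hy with hy | hy | hy
    · -- hy : [aby]
      rcases ha with ha | ha | ha
      · exact Or.inl (B.alpha_of_geo4 hy (B.bsymm ha) (by ext z; simp; try tauto))
      · have k := B.f2 ha hy
        exact Or.inl (B.alpha_of_geo4 k.1 k.2 (by ext z; simp; try tauto))
      · rcases hb with hb | hb | hb
        · exact Or.inr (Or.inl (B.beta_swap (B.betaCase hy hx (B.bsymm hb) (B.bsymm ha)
            (hline.trans (B.line_symm x y)))))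
        · exact Or.inl (B.alpha_of_geo4 (B.bsymm hb) (B.bsymm ha) (by ext z; simp; try tauto))
        · exact Or.inl (B.alpha_of_geo4 (B.bsymm hx) hb (by ext z; simp; try tauto))
    · -- hy : [ayb]
      have k := B.f2 hx hy
      exact Or.inl (B.alpha_of_geo4 k.1 k.2 (by ext z; simp; try tauto))
    · -- hy : [yab]
      rcases ha with ha | ha | ha
      · exact Or.inl (B.alpha_of_geo4 ha hx (by ext z; simp; try tauto))
      · rcases hb with hb | hb | hb
        · exact Or.inl (B.alpha_of_geo4 ha hb (by ext z; simp; try tauto))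
        · exact Or.inl (B.alpha_of_geo4 hx hb (by ext z; simp; try tauto))
        · exact Or.inl (B.alpha_of_geo4 (B.bsymm hx) hb (by ext z; simp; try tauto))
      · exact Or.inl (B.alpha_of_geo4 (B.bsymm ha) hy (by ext z; simp; try tauto))
end

section
/- In any pseudometric betweenness, any two distinct γ-pairs that generate the same line are disjoint (they share no point). -/
namespace PseudometricBetweenness

variable {V : Type*}

lemma btw_comm' (B : PseudometricBetweenness V) (x y z : V) :
    B.btw x y z ↔ B.btw z y x := ⟨B.m1 _ _ _, B.m1 _ _ _⟩

lemma line_comm' (B : PseudometricBetweenness V) (a b : V) : B.line a b = B.line b a := by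
  ext x
  simp only [line, Set.mem_union, Set.mem_insert_iff, Set.mem_singleton_iff, Set.mem_setOf_eq]
  rw [B.btw_comm' a b x, B.btw_comm' a x b, B.btw_comm' x a b]
  tauto

lemma O_comm' (B : PseudometricBetweenness V) (a b : V) : B.O a b = B.O b a := by
  ext x
  simp only [O, Set.mem_setOf_eq]
  rw [B.btw_comm' x a b, B.btw_comm' a b x]
  tauto

lemma mem_line_struct (B : PseudometricBetweenness V) {a b x : V} (hO : B.O a b = ∅)
    (hx : x ∈ B.line a b) : x = a ∨ x = b ∨ B.btw a x b := by
  have hO' := Set.eq_empty_iff_forall_notMem.mp hO x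
  simp only [O, Set.mem_setOf_eq, not_or] at hO'
  rcases hx with h | h
  · rcases h with h | h
    · exact Or.inl h
    · exact Or.inr (Or.inl h)
  · rcases h with h | h | h
    · exact absurd h hO'.2
    · exact Or.inr (Or.inr h)
    · exact absurd h hO'.1

lemma gamma_core (B : PseudometricBetweenness V) {a b d : V}
    (hO1 : B.O a b = ∅) (hO2 : B.O a d = ∅)
    (hline : B.line a b = B.line a d) (hab : a ≠ b) (had : a ≠ d) (hbd : b ≠ d) : False := by
  have hd : d ∈ B.line a b := by
    rw [hline]; exact Set.mem_union_left _ (by simp)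
  have hb : b ∈ B.line a d := by
    rw [← hline]; exact Set.mem_union_left _ (by simp)
  have h1 : B.btw a d b := by
    rcases B.mem_line_struct hO1 hd with h | h | h
    · exact absurd h had.symm
    · exact absurd h hbd.symm
    · exact h
  have h2 : B.btw a b d := by
    rcases B.mem_line_struct hO2 hb with h | h | h
    · exact absurd h hab.symm
    · exact absurd h hbd
    · exact h
  have := (B.m3 a d b d h1 h2).1
  exact absurd rfl (B.m0 _ _ _ this).2.1

end PseudometricBetweenness

/-- Any two distinct γ-pairs that generate the same line are disjoint. -/
theorem gamma_pairs_disjoint {V : Type*} (B : PseudometricBetweenness V)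
    (a b c d : V) (hab : a ≠ b) (hcd : c ≠ d)
    (h1 : B.IsGammaPair a b) (h2 : B.IsGammaPair c d)
    (hne : ({a, b} : Set V) ≠ {c, d}) (hline : B.line a b = B.line c d) :
    ({a, b} : Set V) ∩ {c, d} = ∅ := by
  obtain ⟨-, s, t, -, -, -, -, hOab, -⟩ := h1
  obtain ⟨-, u, v, -, -, -, -, hOcd, -⟩ := h2
  rw [Set.eq_empty_iff_forall_notMem]
  rintro x ⟨hx1, hx2⟩
  simp only [Set.mem_insert_iff, Set.mem_singleton_iff] at hx1 hx2
  rcases hx1 with rfl | rfl <;> rcases hx2 with h | h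
  · -- a = c
    subst h
    have hbd : b ≠ d := by rintro rfl; exact hne rfl
    exact B.gamma_core hOab hOcd hline hab hcd hbd
  · -- a = d
    subst h
    have hbc : b ≠ c := by rintro rfl; exact hne (Set.pair_comm _ _)
    have hline' : B.line x b = B.line x c := by rw [hline, B.line_comm']
    have hOxc : B.O x c = ∅ := (B.O_comm' x c).trans hOcd
    exact B.gamma_core hOab hOxc hline' hab hcd.symm hbc
  · -- b = c
    subst h
    have had : a ≠ d := by rintro rfl; exact hne (Set.pair_comm _ _)
    have hline' : B.line x a = B.line x d := (B.line_comm' x a).trans hline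
    have hOxa : B.O x a = ∅ := (B.O_comm' x a).trans hOab
    exact B.gamma_core hOxa hOcd hline' hab.symm hcd had
  · -- b = d
    subst h
    have hac : a ≠ c := by rintro rfl; exact hne rfl
    have hline' : B.line x a = B.line x c := by
      rw [← B.line_comm', hline, B.line_comm']
    have hOxa : B.O x a = ∅ := (B.O_comm' x a).trans hOab
    have hOxc : B.O x c = ∅ := (B.O_comm' x c).trans hOcd
    exact B.gamma_core hOxa hOxc hline' hab.symm hcd.symm hac
end

section
/- In any pseudometric betweenness, if {a,b} and {c,d} are distinct γ-pairs with ov(ab) = ov(cd), then {a,b} and {c,d} are γ-related. -/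
/-- If `O(a,b) = ∅` then every point of `line a b` is `a`, `b`, or strictly between them. -/
private lemma mem_line_cases {V : Type*} (B : PseudometricBetweenness V) {a b x : V}
    (hO : B.O a b = ∅) (hx : x ∈ B.line a b) : x = a ∨ x = b ∨ B.btw a x b := by
  rcases hx with h | h
  · rcases h with h | h
    · exact Or.inl h
    · exact Or.inr (Or.inl h)
  · rcases h with h | h | h
    · exact absurd (hO ▸ Or.inr h : x ∈ (∅ : Set V)) (Set.notMem_empty x)
    · exact Or.inr (Or.inr h)
    · exact absurd (hO ▸ Or.inl h : x ∈ (∅ : Set V)) (Set.notMem_empty x)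

/-- One cannot have both `[abx]` and `[axb]`. -/
private lemma no_both {V : Type*} (B : PseudometricBetweenness V) {a b x : V}
    (h1 : B.btw a b x) (h2 : B.btw a x b) : False :=
  (B.m0 _ _ _ (B.m3 a b x b h1 h2).1).2.1 rfl

/-- If `{a, b}` and `{c, d}` are distinct γ-pairs generating the same line, then they are
γ-related. -/
theorem gamma_pairs_gamma_related {V : Type*} (B : PseudometricBetweenness V)
    (a b c d : V) (hab : a ≠ b) (hcd : c ≠ d)
    (h1 : B.IsGammaPair a b) (h2 : B.IsGammaPair c d)
    (hne : ({a, b} : Set V) ≠ {c, d}) (hline : B.line a b = B.line c d) :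
    B.GammaRelated a b c d := by
  obtain ⟨-, s, t, -, -, -, ⟨-, hO1, -⟩⟩ := h1
  obtain ⟨-, u, v, -, -, -, ⟨-, hO2, -⟩⟩ := h2
  have hc : c = a ∨ c = b ∨ B.btw a c b :=
    mem_line_cases B hO1 (hline ▸ Or.inl (Set.mem_insert _ _))
  have hd : d = a ∨ d = b ∨ B.btw a d b :=
    mem_line_cases B hO1 (hline ▸ Or.inl (Set.mem_insert_of_mem _ rfl))
  have ha : a = c ∨ a = d ∨ B.btw c a d :=
    mem_line_cases B hO2 (hline ▸ Or.inl (Set.mem_insert _ _))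
  have hb : b = c ∨ b = d ∨ B.btw c b d :=
    mem_line_cases B hO2 (hline ▸ Or.inl (Set.mem_insert_of_mem _ rfl))
  rcases hc with rfl | rfl | hacb
  · -- c = a
    rcases hd with rfl | rfl | hadb
    · exact absurd rfl hcd
    · exact absurd rfl hne
    · rcases hb with rfl | rfl | habd
      · exact absurd rfl hab
      · exact absurd rfl hne
      · exact absurd habd (no_both B hadb)
  · -- c = b
    rcases hd with rfl | rfl | hadb
    · exact (hne (Set.pair_comm _ _)).elim
    · exact absurd rfl hcd
    · rcases ha with rfl | rfl | hbad
      · exact absurd rfl hab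
      · exact ((B.m0 _ _ _ hadb).1 rfl).elim
      · exact absurd (B.m1 _ _ _ hadb) (no_both B hbad)
  · rcases hd with rfl | rfl | hadb
    · -- d = a
      rcases hb with rfl | rfl | hcba
      · exact absurd rfl (B.m0 _ _ _ hacb).2.1.symm
      · exact absurd rfl hab.symm
      · exact absurd hacb (no_both B (B.m1 _ _ _ hcba))
    · -- d = b
      rcases ha with rfl | rfl | hcab
      · exact absurd rfl (B.m0 _ _ _ hacb).1
      · exact absurd rfl hab
      · exact absurd (hO1 ▸ Or.inl hcab : c ∈ (∅ : Set V)) (Set.notMem_empty c)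
    · -- main case
      rcases ha with rfl | rfl | hcad
      · exact absurd rfl (B.m0 _ _ _ hacb).1
      · exact absurd rfl (B.m0 _ _ _ hadb).1
      · rcases hb with rfl | rfl | hcbd
        · exact absurd rfl (B.m0 _ _ _ hacb).2.1.symm
        · exact absurd rfl (B.m0 _ _ _ hadb).2.1.symm
        · exact ⟨⟨hacb, hcbd, B.m1 _ _ _ hadb, B.m1 _ _ _ hcad⟩, hO1, hO2⟩
end

section
/- Let (V,ρ) be the metric space induced by a finite connected graph G, let a, b ∈ V with ρ(a,b) ≥ 2, and let W be a walk in G from a to b. Then there exists a vertex u on W with u ∉ {a,b} such that u ∉ O(a,b), i.e., neither [uab] nor [abu] holds. -/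
/-- In the metric space induced by a graph `G`, `GBtw G a b c` says that `b` lies between
`a` and `c`: the points are distinct and `G.dist a c = G.dist a b + G.dist b c`. -/
def GBtw {V : Type*} (G : SimpleGraph V) (a b c : V) : Prop :=
  a ≠ b ∧ b ≠ c ∧ a ≠ c ∧ G.dist a c = G.dist a b + G.dist b c

/-- The line of the graph metric of `G` generated by two distinct vertices `a` and `b`. -/
def gline {V : Type*} (G : SimpleGraph V) (a b : V) : Set V :=
  {a, b} ∪ {c | GBtw G a b c ∨ GBtw G a c b ∨ GBtw G c a b}

/-- The set of all lines of the graph metric of `G`. -/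
def glines {V : Type*} (G : SimpleGraph V) : Set (Set V) :=
  {L | ∃ a b : V, a ≠ b ∧ L = gline G a b}

private lemma aux_walk {V : Type*} (G : SimpleGraph V) (hG : G.Connected) (a b : V)
    (hd : 0 < G.dist a b) :
    ∀ {x : V} (W : G.Walk x b),
      (G.dist a x : ℤ) - G.dist x b = -(G.dist a b : ℤ) →
      ∃ u ∈ W.support,
        -(G.dist a b : ℤ) < (G.dist a u : ℤ) - G.dist u b ∧
        (G.dist a u : ℤ) - G.dist u b ≤ -(G.dist a b : ℤ) + 2 := by
  intro x W
  induction W with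
  | nil =>
      intro hx
      simp only [SimpleGraph.dist_self, Nat.cast_zero] at hx
      omega
  | @cons x y b h W ih =>
      intro hx
      by_cases hy : (G.dist a y : ℤ) - G.dist y b = -(G.dist a b : ℤ)
      · obtain ⟨u, hu, h1, h2⟩ := ih hd hy
        exact ⟨u, by simp [hu], h1, h2⟩
      · refine ⟨y, ?_, ?_, ?_⟩
        · simp [SimpleGraph.Walk.support_cons, SimpleGraph.Walk.start_mem_support]
        · have htri : G.dist y b ≤ G.dist y a + G.dist a b := hG.dist_triangle
          have hc : G.dist y a = G.dist a y := SimpleGraph.dist_comm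
          have : -(G.dist a b : ℤ) ≤ (G.dist a y : ℤ) - G.dist y b := by
            omega
          omega
        · have hxy : G.dist x y = 1 := SimpleGraph.dist_eq_one_iff_adj.mpr h
          have h1 : G.dist a y ≤ G.dist a x + G.dist x y := hG.dist_triangle
          have h2 : G.dist x b ≤ G.dist x y + G.dist y b := hG.dist_triangle
          rw [hxy] at h1 h2
          omega

/-- In the metric of a finite connected graph, if `dist a b ≥ 2` then every walk `W` from
`a` to `b` contains a vertex `u ∉ {a, b}` with `u ∉ O(a, b)`, i.e. neither `[uab]` nor
`[abu]` holds. -/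
theorem walk_has_nonouter_vertex {V : Type*} [Fintype V] (G : SimpleGraph V)
    (hG : G.Connected) (a b : V) (h2 : 2 ≤ G.dist a b) (W : G.Walk a b) :
    ∃ u ∈ W.support, u ≠ a ∧ u ≠ b ∧ ¬ GBtw G u a b ∧ ¬ GBtw G a b u := by
  have hd : 0 < G.dist a b := by omega
  have ha : (G.dist a a : ℤ) - G.dist a b = -(G.dist a b : ℤ) := by
    simp
  obtain ⟨u, hu, hlo, hup⟩ := aux_walk G hG a b hd W ha
  have hc1 : G.dist u a = G.dist a u := SimpleGraph.dist_comm
  have hc2 : G.dist b u = G.dist u b := SimpleGraph.dist_comm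
  refine ⟨u, hu, ?_, ?_, ?_, ?_⟩
  · rintro rfl
    simp only [SimpleGraph.dist_self, Nat.cast_zero] at hlo hup
    omega
  · rintro rfl
    simp only [SimpleGraph.dist_self, Nat.cast_zero] at hlo hup
    omega
  · rintro ⟨-, -, -, h⟩
    push_cast [h, hc1] at hlo hup
    omega
  · rintro ⟨-, -, -, h⟩
    push_cast [h, hc2] at hlo hup
    omega
end
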